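/- For every real λ, every natural number n, and every real x, one has (x)_{n,λ} = Σ_{k=0}^n S_{2,λ}(n,k) (x)_k, where S_{2,λ}(n,k) = (1/k!) Σ_{j=0}^k (−1)^{k−j} C(k,j) (j)_{n,λ} and (x)_k = x(x−1)⋯(x−k+1) is the ordinary falling factorial; that is, the numbers given by the explicit alternating-sum formula are exactly the connection coefficients of the generalized falling factorials in terms of ordinary falling factorials. -/
import Mathlib


noncomputable section

/-- Generalized falling factorial `(x)_{n,λ} = x(x-λ)⋯(x-(n-1)λ)`, with `(x)_{0,λ} = 1`. -/
def dff (lam x : ℝ) (n : ℕ) : ℝ := ∏ i ∈ Finset.range n, (x - i * lam)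

/-- Degenerate exponential `e_λ(y) = ∑_{n=0}^∞ (1)_{n,λ} y^n / n!`. -/
def dexp (lam y : ℝ) : ℝ := ∑' n : ℕ, dff lam 1 n * y ^ n / n.factorial

/-- Truncated degenerate exponential tail
`T_n(y) = e_λ(y) - ∑_{k=0}^n (1)_{k,λ} y^k / k!`. -/
def dtail (lam y : ℝ) (n : ℕ) : ℝ :=
  dexp lam y - ∑ k ∈ Finset.range (n + 1), dff lam 1 k * y ^ k / k.factorial

/-- Degenerate Stirling number of the second kind
`S_{2,λ}(n,k) = (1/k!) ∑_{j=0}^k (-1)^{k-j} C(k,j) (j)_{n,λ}`. -/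
def dStirling (lam : ℝ) (n k : ℕ) : ℝ :=
  (1 / (k.factorial : ℝ)) *
    ∑ j ∈ Finset.range (k + 1), (-1 : ℝ) ^ (k - j) * (k.choose j : ℝ) * dff lam j n

/-- Ordinary falling factorial `(x)_k = x(x-1)⋯(x-k+1)` for real `x`, with `(x)_0 = 1`. -/
def ff (x : ℝ) (k : ℕ) : ℝ := ∏ i ∈ Finset.range k, (x - i)

lemma ff_succ (x : ℝ) (k : ℕ) : ff x (k+1) = ff x k * (x - k) := Finset.prod_range_succ _ _

lemma dff_succ (lam x : ℝ) (n : ℕ) : dff lam x (n+1) = dff lam x n * (x - n * lam) :=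
  Finset.prod_range_succ _ _

lemma ff_nat_self (m : ℕ) : ff (m : ℝ) m ≠ 0 := by
  unfold ff
  apply Finset.prod_ne_zero_iff.mpr
  intro i hi
  have : (i : ℝ) < m := by exact_mod_cast Finset.mem_range.mp hi
  intro h
  linarith

lemma dStirling_zero (lam : ℝ) (n : ℕ) : dStirling lam n 0 = dff lam 0 n := by
  simp [dStirling]

lemma alt_sum (k : ℕ) :
    (∑ j ∈ Finset.range (k+1), (-1:ℝ)^(k-j) * (k.choose j : ℝ)) = if k = 0 then 1 else 0 := by
  have h := Finset.sum_range_reflect (fun j => (-1:ℝ)^(k-j) * (k.choose j : ℝ)) (k+1)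
  simp only [Nat.add_sub_cancel] at h
  have h2 : (∑ j ∈ Finset.range (k+1), (-1:ℝ)^(k-j) * (k.choose j : ℝ))
      = ∑ j ∈ Finset.range (k+1), (-1:ℝ)^j * (k.choose j : ℝ) := by
    rw [← h]
    apply Finset.sum_congr rfl
    intro j hj
    have hj' : j ≤ k := Nat.lt_succ_iff.mp (Finset.mem_range.mp hj)
    rw [Nat.sub_sub_self hj', Nat.choose_symm hj']
  rw [h2]
  have h3 := Int.alternating_sum_range_choose (n := k)
  have h4 : ((∑ i ∈ Finset.range (k + 1), (-1:ℤ) ^ i * (k.choose i : ℤ) : ℤ) : ℝ)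
      = ((if k = 0 then 1 else 0 : ℤ) : ℝ) := by rw [h3]
  push_cast at h4
  convert h4 using 2 <;> simp

lemma dStirling_rec (lam : ℝ) (n k : ℕ) :
    dStirling lam (n+1) (k+1)
      = dStirling lam n k + (((k:ℝ)+1) - n * lam) * dStirling lam n (k+1) := by
  unfold dStirling
  set c : ℝ := ((k:ℝ)+1) - n * lam with hc
  have main : ∀ j ∈ Finset.range (k+1),
      (-1:ℝ)^(k+1-j) * ((k+1).choose j : ℝ) * (((j:ℝ) - ((k:ℝ)+1)) * dff lam j n)
      = ((k:ℝ)+1) * ((-1:ℝ)^(k-j) * (k.choose j : ℝ) * dff lam j n) := by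
    intro j hj
    have hj' : j ≤ k := Nat.lt_succ_iff.mp (Finset.mem_range.mp hj)
    have hch : ((k+1).choose j * (k+1-j) : ℕ) = (k+1) * k.choose j := by
      have h1 : (k+1).choose (j+1) * (j+1) = (k+1).choose j * (k+1-j) :=
        Nat.choose_succ_right_eq (k+1) j
      have h2 : (k+1) * k.choose j = (k+1).choose (j+1) * (j+1) :=
        Nat.add_one_mul_choose_eq k j
      omega
    have hchR : (((k:ℝ)+1) - (j:ℝ)) * (((k+1).choose j : ℕ) : ℝ)
        = ((k:ℝ)+1) * ((k.choose j : ℕ) : ℝ) := by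
      have hc2 := congrArg (fun t : ℕ => (t : ℝ)) hch
      push_cast [Nat.cast_sub (by omega : j ≤ k+1)] at hc2
      push_cast
      linear_combination hc2
    have hsign : (-1:ℝ)^(k+1-j) = -(-1:ℝ)^(k-j) := by
      rw [Nat.succ_sub hj', pow_succ]
      ring
    rw [hsign]
    linear_combination ((-1:ℝ)^(k-j) * dff lam j n) * hchR
  have S1 : (∑ j ∈ Finset.range (k+2),
        (-1:ℝ)^(k+1-j) * ((k+1).choose j : ℝ) * (((j:ℝ) - ((k:ℝ)+1)) * dff lam j n))
      = ∑ j ∈ Finset.range (k+1),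
        ((k:ℝ)+1) * ((-1:ℝ)^(k-j) * (k.choose j : ℝ) * dff lam j n) := by
    rw [Finset.sum_range_succ]
    have hz : (-1:ℝ)^(k+1-(k+1)) * (((k+1).choose (k+1) : ℕ) : ℝ)
        * ((((k+1:ℕ)):ℝ) - ((k:ℝ)+1)) * dff lam ((k+1):ℕ) n = 0 := by
      push_cast; ring
    have hz' : (-1:ℝ)^(k+1-(k+1)) * (((k+1).choose (k+1) : ℕ) : ℝ)
        * (((((k+1):ℕ)):ℝ) - ((k:ℝ)+1)) * dff lam ((k+1):ℕ) n = 0 := hz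
    rw [Finset.sum_congr rfl main]
    have : ((((k+1):ℕ):ℝ) - ((k:ℝ)+1)) = 0 := by push_cast; ring
    rw [this]
    ring
  have key : (∑ j ∈ Finset.range (k+2), (-1:ℝ)^(k+1-j) * ((k+1).choose j : ℝ) * dff lam j (n+1))
      = ((k:ℝ)+1) * (∑ j ∈ Finset.range (k+1), (-1:ℝ)^(k-j) * (k.choose j : ℝ) * dff lam j n)
        + c * (∑ j ∈ Finset.range (k+2), (-1:ℝ)^(k+1-j) * ((k+1).choose j : ℝ) * dff lam j n) := by
    have expand : ∀ j ∈ Finset.range (k+2),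
        (-1:ℝ)^(k+1-j) * ((k+1).choose j : ℝ) * dff lam j (n+1)
        = (-1:ℝ)^(k+1-j) * ((k+1).choose j : ℝ) * (((j:ℝ) - ((k:ℝ)+1)) * dff lam j n)
          + c * ((-1:ℝ)^(k+1-j) * ((k+1).choose j : ℝ) * dff lam j n) := by
      intro j _
      rw [dff_succ]
      ring
    rw [Finset.sum_congr rfl expand, Finset.sum_add_distrib, ← Finset.mul_sum, S1,
      ← Finset.mul_sum]
  show (1 / ((k+1).factorial : ℝ)) * _ = _
  rw [key, Nat.factorial_succ]
  have h1 : ((k.factorial : ℕ) : ℝ) ≠ 0 := Nat.cast_ne_zero.mpr k.factorial_ne_zero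
  have h2 : ((k:ℝ)+1) ≠ 0 := by positivity
  push_cast
  field_simp

lemma main_lemma (lam : ℝ) : ∀ n m, n ≤ m → ∀ x : ℝ,
    dff lam x n = ∑ k ∈ Finset.range (m+1), dStirling lam n k * ff x k := by
  intro n
  induction n with
  | zero =>
    intro m _ x
    have hk : ∀ k, dStirling lam 0 k = if k = 0 then 1 else 0 := by
      intro k
      unfold dStirling
      have : ∀ j ∈ Finset.range (k+1),
          (-1:ℝ)^(k-j) * (k.choose j : ℝ) * dff lam j 0
          = (-1:ℝ)^(k-j) * (k.choose j : ℝ) := by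
        intro j _; simp [dff]
      rw [Finset.sum_congr rfl this, alt_sum]
      by_cases h : k = 0 <;> simp [h]
    have : ∑ k ∈ Finset.range (m+1), dStirling lam 0 k * ff x k
        = ∑ k ∈ Finset.range (m+1), (if k = 0 then 1 else 0 : ℝ) * ff x k := by
      apply Finset.sum_congr rfl
      intro k _; rw [hk]
    rw [this]
    simp [dff, ff, Finset.sum_ite_eq']
  | succ n ih =>
    intro m hm x
    obtain ⟨p, rfl⟩ : ∃ p, m = p + 1 := ⟨m - 1, by omega⟩
    have hnp : n ≤ p := by omega
    -- vanishing of dStirling lam n (p+1)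
    have hS0 : dStirling lam n (p+1) = 0 := by
      have e1 := ih p hnp ((p+1 : ℕ) : ℝ)
      have e2 := ih (p+1) (by omega) ((p+1 : ℕ) : ℝ)
      rw [Finset.sum_range_succ] at e2
      rw [e1] at e2
      have := ff_nat_self (p+1)
      have h0 : dStirling lam n (p+1) * ff ((p+1 : ℕ) : ℝ) (p+1) = 0 := by linarith
      rcases mul_eq_zero.mp h0 with h | h
      · exact h
      · exact absurd h this
    rw [dff_succ, ih (p+1) (by omega) x, Finset.sum_mul]
    have expand : ∀ k ∈ Finset.range (p+2),
        dStirling lam n k * ff x k * (x - n * lam)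
        = dStirling lam n k * ff x (k+1) + ((k:ℝ) - n * lam) * (dStirling lam n k * ff x k) := by
      intro k _
      rw [ff_succ]
      ring
    rw [Finset.sum_congr rfl expand, Finset.sum_add_distrib]
    have F1 : (∑ k ∈ Finset.range (p+2), dStirling lam n k * ff x (k+1))
        = ∑ k ∈ Finset.range (p+1), dStirling lam n k * ff x (k+1) := by
      rw [Finset.sum_range_succ, hS0]
      ring
    have F2 : (∑ k ∈ Finset.range (p+2), ((k:ℝ) - n * lam) * (dStirling lam n k * ff x k))
        = ((0:ℝ) - n * lam) * (dStirling lam n 0 * ff x 0)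
          + ∑ k ∈ Finset.range (p+1),
              (((k:ℝ)+1) - n * lam) * (dStirling lam n (k+1) * ff x (k+1)) := by
      rw [Finset.sum_range_succ']
      push_cast
      ring
    rw [F1, F2]
    have RHS : (∑ k ∈ Finset.range (p+1+1), dStirling lam (n+1) k * ff x k)
        = dStirling lam (n+1) 0 * ff x 0
          + ∑ k ∈ Finset.range (p+1), dStirling lam (n+1) (k+1) * ff x (k+1) := by
      rw [Finset.sum_range_succ']
      ring
    rw [RHS]
    have h00 : dStirling lam (n+1) 0 = ((0:ℝ) - n * lam) * dStirling lam n 0 := by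
      rw [dStirling_zero, dStirling_zero, dff_succ]
      ring
    have hrec : ∀ k ∈ Finset.range (p+1),
        dStirling lam (n+1) (k+1) * ff x (k+1)
        = dStirling lam n k * ff x (k+1)
          + (((k:ℝ)+1) - n * lam) * (dStirling lam n (k+1) * ff x (k+1)) := by
      intro k _
      rw [dStirling_rec]
      ring
    rw [Finset.sum_congr rfl hrec, Finset.sum_add_distrib, h00]
    ring

theorem stmt_10 (lam : ℝ) (n : ℕ) (x : ℝ) :
    dff lam x n = ∑ k ∈ Finset.range (n + 1), dStirling lam n k * ff x k :=
  main_lemma lam n n le_rfl x
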